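/- Let A be a finite-dimensional degenerate evolution algebra with natural basis B = {e_i}_{i ∈ Λ} such that A ≠ rad(A) and the graph Γ(A,B) is connected. Then V = span{e_i : i ∈ Λ \ λ_m(B)} (where m = asi(A), so rad(A) = span{e_i : i ∈ λ_m(B)}) is not an ideal of A. -/

import Mathlib

open Submodule

section EvolutionPreamble

/-- The set of `k`-th generation descendants of a vertex in a directed graph
given by an edge relation `E`; `Dk E 0 i = {i}`. -/
def Dk {V : Type*} (E : V → V → Prop) : ℕ → V → Set V
  | 0, i => {i}
  | n + 1, i => {k | ∃ j ∈ Dk E n i, E j k}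

/-- A vertex is cyclic if there is a (possibly trivial) path from it to a vertex
lying on a cycle. -/
def IsCyclicVertex {V : Type*} (E : V → V → Prop) (i : V) : Prop :=
  ∃ j, Relation.ReflTransGen E i j ∧ Relation.TransGen E j j

/-- Connectedness of a directed graph: every nontrivial partition of the
vertex set is crossed by an edge (in one direction or the other). -/
def GraphConnected {V : Type*} (E : V → V → Prop) : Prop :=
  ∀ s : Set V, s.Nonempty → sᶜ.Nonempty → ∃ x ∈ s, ∃ y ∈ sᶜ, E x y ∨ E y x

variable {K : Type*} [Field K] {A : Type*} [NonUnitalNonAssocRing A]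
  [Module K A] [SMulCommClass K A A] [IsScalarTower K A A] {ι : Type*}

/-- A basis is natural if distinct basis vectors multiply to zero. -/
def IsNaturalBasis (B : Module.Basis ι K A) : Prop := ∀ i j, i ≠ j → B i * B j = 0

/-- Edge relation of the directed graph `Γ(A,B)` associated to an evolution
algebra `A` with natural basis `B`: `(i,k)` is an edge iff the structure
constant `w_{ik}` is nonzero. -/
def edge (B : Module.Basis ι K A) (i k : ι) : Prop := B.repr (B i * B i) k ≠ 0

/-- First-generation descendants in `Γ(A,B)`. -/
def D1 (B : Module.Basis ι K A) (i : ι) : Set ι := {k | edge B i k}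

/-- The increasing chain of index sets `λ_k(B)`: `λ_0 = ∅`,
`λ_{k+1}(B) = {i : D¹(i) ⊆ λ_k(B)}`.  In particular
`λ_1(B) = {i : e_i² = 0}`. -/
def lam (B : Module.Basis ι K A) : ℕ → Set ι
  | 0 => ∅
  | n + 1 => {i | ∀ k, edge B i k → k ∈ lam B n}

/-- `I` is a (two-sided) ideal. -/
def IsIdeal (I : Submodule K A) : Prop := ∀ x ∈ I, ∀ a : A, x * a ∈ I ∧ a * x ∈ I

/-- The absorption property: `xA ⊆ I` implies `x ∈ I`. -/
def HasAbsorption (I : Submodule K A) : Prop := ∀ x : A, (∀ a : A, x * a ∈ I) → x ∈ I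

/-- The absorption radical: intersection of all ideals with the absorption property. -/
def rad (K : Type*) (A : Type*) [Field K] [NonUnitalNonAssocRing A]
    [Module K A] [SMulCommClass K A A] [IsScalarTower K A A] : Submodule K A :=
  sInf {I : Submodule K A | IsIdeal I ∧ HasAbsorption I}

lemma rad_isIdeal : IsIdeal (rad K A) := by
  intro x hx a
  rw [rad, Submodule.mem_sInf] at hx
  constructor <;>
    · rw [rad, Submodule.mem_sInf]
      intro I hI
      first
        | exact (hI.1 x (hx I hI) a).1
        | exact (hI.1 x (hx I hI) a).2

/-- The annihilator `ann(A) = {x : xA = Ax = 0}` as a submodule. -/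
def annSub (K : Type*) (A : Type*) [Field K] [NonUnitalNonAssocRing A]
    [Module K A] [SMulCommClass K A A] [IsScalarTower K A A] : Submodule K A where
  carrier := {x | ∀ a : A, x * a = 0 ∧ a * x = 0}
  add_mem' := by
    intro x y hx hy a
    constructor
    · rw [add_mul, (hx a).1, (hy a).1, add_zero]
    · rw [mul_add, (hx a).2, (hy a).2, add_zero]
  zero_mem' := by intro a; simp
  smul_mem' := by
    intro c x hx a
    constructor
    · rw [smul_mul_assoc, (hx a).1, smul_zero]
    · rw [mul_smul_comm, (hx a).2, smul_zero]

/-- The upper annihilating series: `ann⁰(A) = 0`,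
`annⁱ⁺¹(A) = {x : xA ∪ Ax ⊆ annⁱ(A)}`. -/
def annSeries (K : Type*) (A : Type*) [Field K] [NonUnitalNonAssocRing A]
    [Module K A] [SMulCommClass K A A] [IsScalarTower K A A] : ℕ → Submodule K A
  | 0 => ⊥
  | n + 1 =>
    { carrier := {x | ∀ a : A, x * a ∈ annSeries K A n ∧ a * x ∈ annSeries K A n}
      add_mem' := by
        intro x y hx hy a
        constructor
        · rw [add_mul]; exact add_mem (hx a).1 (hy a).1
        · rw [mul_add]; exact add_mem (hx a).2 (hy a).2
      zero_mem' := by intro a; simp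
      smul_mem' := by
        intro c x hx a
        constructor
        · rw [smul_mul_assoc]; exact smul_mem _ c (hx a).1
        · rw [mul_smul_comm]; exact smul_mem _ c (hx a).2 }

/-- The annihilator stabilizing index `asi(A)`. -/
noncomputable def asi (K : Type*) (A : Type*) [Field K] [NonUnitalNonAssocRing A]
    [Module K A] [SMulCommClass K A A] [IsScalarTower K A A] : ℕ :=
  sInf {q : ℕ | annSeries K A q = annSeries K A (q + 1)}

/-- Product of two submodules (span of pairwise products). -/
def smulSub (I J : Submodule K A) : Submodule K A :=
  Submodule.span K (Set.image2 (· * ·) (I : Set A) (J : Set A))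

/-- Powers of a subalgebra/ideal, with `N^{k} = Σ_{i+j=k, i,j ≥ 1} Nⁱ Nʲ`. -/
def npow (I : Submodule K A) : ℕ → Submodule K A
  | 0 => ⊥
  | 1 => I
  | n + 2 => ⨆ i : Fin (n + 1), smulSub (npow I (i.1 + 1)) (npow I (n + 1 - i.1))
  termination_by n => n
  decreasing_by
  · have := i.isLt; omega
  · have := i.isLt; omega

/-- `I` is an ideal of the subalgebra `N`. -/
def IsIdealIn (N I : Submodule K A) : Prop :=
  I ≤ N ∧ ∀ x ∈ I, ∀ a ∈ N, x * a ∈ I ∧ a * x ∈ I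

/-- The (sub)algebra `N` is decomposable: it is the direct sum of two nonzero
ideals of `N`. -/
def DecomposableIn (N : Submodule K A) : Prop :=
  ∃ I J : Submodule K A, IsIdealIn N I ∧ IsIdealIn N J ∧ I ≠ ⊥ ∧ J ≠ ⊥ ∧
    I ⊓ J = ⊥ ∧ I ⊔ J = N

/-- Multiplication inside an ideal `N` (an ideal is closed under products). -/
def subMul {N : Submodule K A} (hN : IsIdeal N) (x y : N) : N :=
  ⟨(x : A) * (y : A), (hN x x.2 y).1⟩

/-- The induced multiplication on the quotient `A ⧸ I` by an ideal `I`. -/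
def quotMul (I : Submodule K A) (hI : IsIdeal I) (x y : A ⧸ I) : A ⧸ I :=
  Quotient.liftOn₂ x y (fun a b => Submodule.Quotient.mk (a * b)) (by
    intro a b a' b' ha hb
    have ha' : a - a' ∈ I := (Submodule.quotientRel_def I).mp ha
    have hb' : b - b' ∈ I := (Submodule.quotientRel_def I).mp hb
    refine (Submodule.Quotient.eq I).mpr ?_
    have h : a * b - a' * b' = a * (b - b') + (a - a') * b' := by
      rw [mul_sub, sub_mul]; abel
    rw [h]
    exact add_mem (hI _ hb' a).2 (hI _ ha' b').1)

/-- Edge relation of the graph associated to the quotient evolution algebra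
`A ⧸ I` relative to a basis `C`. -/
def edgeQ {κ : Type*} (I : Submodule K A) (hI : IsIdeal I)
    (C : Module.Basis κ K (A ⧸ I)) (i k : κ) : Prop :=
  C.repr (quotMul I hI (C i) (C i)) k ≠ 0

end EvolutionPreamble

/- In a natural basis the radical filtration is combinatorial: `annⁿ(A)` is spanned by the
basis vectors indexed by `λ_n(B)`, so for `m = asi(A)` the set `λ_m(B)` has no edges leaving it.
If `V = span{e_i : i ∉ λ_m(B)}` were an ideal, `e_i² ∈ V` for `i ∉ λ_m(B)` and no edge would enter
`λ_m(B)` either.  Connectedness then forces `λ_m(B)` to be empty or everything; degeneracy rules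
out the first (an `e_i` with `e_i² = 0` lies in `λ_1(B) ⊆ λ_m(B)`) and `A ≠ rad(A)` the second. -/

theorem GraphConnected.eq_empty_or_eq_univ {V : Type*} {E : V → V → Prop}
    (hE : GraphConnected E) {s : Set V} (hs : ∀ x y, E x y → (x ∈ s ↔ y ∈ s)) :
    s = ∅ ∨ s = Set.univ := by
  by_contra! h
  obtain ⟨x, hx, y, hy, hxy | hyx⟩ := hE s h.1 (Set.nonempty_compl.2 h.2)
  · exact hy ((hs x y hxy).1 hx)
  · exact hy ((hs y x hyx).2 hx)

section NaturalBasis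

variable {K : Type*} [Field K] {A : Type*} [NonUnitalNonAssocRing A] [Module K A]
  {ι : Type*} {B : Module.Basis ι K A}

theorem IsNaturalBasis.mul_basis [IsScalarTower K A A] (hB : IsNaturalBasis B) (x : A) (i : ι) :
    x * B i = B.repr x i • (B i * B i) := by
  conv_lhs => rw [← B.linearCombination_repr x]
  rw [Finsupp.linearCombination_apply, Finsupp.sum, Finset.sum_mul,
    Finset.sum_eq_single i (fun j _ hj ↦ by rw [smul_mul_assoc, hB j i hj, smul_zero])
      (fun hi ↦ by rw [Finsupp.notMem_support_iff.mp hi, zero_smul, zero_mul]),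
    smul_mul_assoc]

theorem IsNaturalBasis.basis_mul [SMulCommClass K A A] (hB : IsNaturalBasis B) (x : A) (i : ι) :
    B i * x = B.repr x i • (B i * B i) := by
  conv_lhs => rw [← B.linearCombination_repr x]
  rw [Finsupp.linearCombination_apply, Finsupp.sum, Finset.mul_sum,
    Finset.sum_eq_single i (fun j _ hj ↦ by rw [mul_smul_comm, hB i j hj.symm, smul_zero])
      (fun hi ↦ by rw [Finsupp.notMem_support_iff.mp hi, zero_smul, mul_zero]),
    mul_smul_comm]

theorem mul_self_mem_span_image_iff (B : Module.Basis ι K A) (i : ι) (s : Set ι) :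
    B i * B i ∈ span K (B '' s) ↔ ∀ k, edge B i k → k ∈ s :=
  B.mem_span_image.trans ⟨fun h _ hk ↦ h (Finsupp.mem_support_iff.2 hk),
    fun h _ hk ↦ h _ (Finsupp.mem_support_iff.1 hk)⟩

theorem lam_monotone (B : Module.Basis ι K A) : Monotone (lam B) := by
  refine monotone_nat_of_le_succ fun n ↦ ?_
  induction n with
  | zero => exact Set.empty_subset _
  | succ n ih => exact fun i hi k hk ↦ ih (hi k hk)

theorem mem_lam_one_iff (B : Module.Basis ι K A) (i : ι) : i ∈ lam B 1 ↔ B i * B i = 0 := by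
  simp only [lam, Set.mem_empty_iff_false, Set.mem_ofPred_eq, edge, ne_eq, imp_false, not_not]
  exact ⟨fun h ↦ B.repr.map_eq_zero_iff.1 (Finsupp.ext h), fun h k ↦ by simp [h]⟩

theorem IsNaturalBasis.span_image_lam [SMulCommClass K A A] [IsScalarTower K A A]
    (hB : IsNaturalBasis B) (n : ℕ) :
    span K (B '' lam B n) = annSeries K A n := by
  induction n with
  | zero => simp [lam, annSeries]
  | succ n ih =>
    apply le_antisymm
    · rw [span_le]
      rintro _ ⟨i, hi, rfl⟩ a
      have hsq : B i * B i ∈ annSeries K A n := ih ▸ (mul_self_mem_span_image_iff B i _).2 hi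
      rw [hB.mul_basis, hB.basis_mul]
      exact ⟨smul_mem _ _ hsq, smul_mem _ _ hsq⟩
    · intro x hx
      refine B.mem_span_image.2 fun i hi ↦ ?_
      have hxi : B.repr x i ≠ 0 := Finsupp.mem_support_iff.1 hi
      have hsq : B i * B i ∈ annSeries K A n := by
        have h := smul_mem _ (B.repr x i)⁻¹ (hB.mul_basis x i ▸ (hx (B i)).1)
        rwa [inv_smul_smul₀ hxi] at h
      rw [← ih, mul_self_mem_span_image_iff] at hsq
      exact hsq

theorem exists_lam_eq_lam_succ [Finite ι] (B : Module.Basis ι K A) :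
    ∃ n, lam B n = lam B (n + 1) := by
  obtain ⟨n, hn⟩ := WellFoundedGT.monotone_chain_condition ⟨lam B, lam_monotone B⟩
  exact ⟨n, hn (n + 1) n.le_succ⟩

theorem mem_lam_of_edge_of_lam_eq_succ {n : ℕ} (hn : lam B n = lam B (n + 1)) {i k : ι}
    (hi : i ∈ lam B n) (hik : edge B i k) : k ∈ lam B n := by
  rw [hn] at hi
  exact hi k hik

theorem IsIdeal.mem_of_edge_of_span_image {s : Set ι} (hV : IsIdeal (span K (B '' s)))
    {i k : ι} (hi : i ∈ s) (hik : edge B i k) : k ∈ s :=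
  (mul_self_mem_span_image_iff B i s).1 (hV _ (subset_span ⟨i, hi, rfl⟩) (B i)).1 k hik

variable [SMulCommClass K A A] [IsScalarTower K A A]

theorem annSeries_one : annSeries K A 1 = annSub K A := by
  ext x
  simp [annSeries, annSub]

theorem annSeries_le_rad (n : ℕ) : annSeries K A n ≤ rad K A := by
  induction n with
  | zero => exact bot_le
  | succ n ih =>
    intro x hx
    rw [rad, mem_sInf]
    exact fun I hI ↦ hI.2 x fun a ↦ (sInf_le hI : rad K A ≤ I) (ih (hx a).1)

theorem IsNaturalBasis.lam_ne_univ (hB : IsNaturalBasis B) (hne : rad K A ≠ ⊤) (n : ℕ) :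
    lam B n ≠ Set.univ := by
  intro h
  apply hne
  rw [eq_top_iff, ← B.span_eq, ← Set.image_univ, ← h, hB.span_image_lam]
  exact annSeries_le_rad n

theorem IsNaturalBasis.annSeries_asi_eq_succ [Finite ι] (hB : IsNaturalBasis B) :
    annSeries K A (asi K A) = annSeries K A (asi K A + 1) := by
  obtain ⟨n, hn⟩ := exists_lam_eq_lam_succ B
  refine Nat.sInf_mem (s := {q | annSeries K A q = annSeries K A (q + 1)}) ⟨n, ?_⟩
  rw [Set.mem_ofPred_eq, ← hB.span_image_lam, ← hB.span_image_lam, hn]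

theorem IsNaturalBasis.lam_asi_eq_succ [Finite ι] (hB : IsNaturalBasis B) :
    lam B (asi K A) = lam B (asi K A + 1) :=
  Set.ext fun i ↦ by
    rw [← B.self_mem_span_image, hB.span_image_lam, hB.annSeries_asi_eq_succ,
      ← hB.span_image_lam, B.self_mem_span_image]

theorem IsNaturalBasis.exists_mul_self_eq_zero (hB : IsNaturalBasis B) (hdeg : annSub K A ≠ ⊥) :
    ∃ i, B i * B i = 0 := by
  obtain ⟨x, hx, hx0⟩ := (Submodule.ne_bot_iff _).1 hdeg
  obtain ⟨i, hi⟩ : ∃ i, B.repr x i ≠ 0 := by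
    by_contra! h
    exact hx0 (B.repr.map_eq_zero_iff.1 (Finsupp.ext h))
  exact ⟨i, (smul_eq_zero.1 ((hB.mul_basis x i).symm.trans (hx (B i)).1)).resolve_left hi⟩

theorem IsNaturalBasis.lam_asi_nonempty [Finite ι] (hB : IsNaturalBasis B)
    (hdeg : annSub K A ≠ ⊥) : (lam B (asi K A)).Nonempty := by
  have hasi : asi K A ≠ 0 := by
    intro h
    have h01 := hB.annSeries_asi_eq_succ
    rw [h, annSeries_one] at h01
    exact hdeg h01.symm
  obtain ⟨i, hi⟩ := hB.exists_mul_self_eq_zero hdeg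
  exact ⟨i, lam_monotone B (Nat.one_le_iff_ne_zero.2 hasi) ((mem_lam_one_iff B i).2 hi)⟩

end NaturalBasis

/-- In a degenerate evolution algebra with connected graph and `A ≠ rad(A)`,
the complementary span of the radical is not an ideal. -/
theorem stmt16 {K : Type*} [Field K] {A : Type*} [NonUnitalNonAssocRing A]
    [Module K A] [SMulCommClass K A A] [IsScalarTower K A A]
    {ι : Type*} [Fintype ι] (B : Module.Basis ι K A) (hB : IsNaturalBasis B)
    (hdeg : annSub K A ≠ ⊥) (hne : rad K A ≠ (⊤ : Submodule K A))
    (hconn : GraphConnected (edge B)) :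
    ¬ IsIdeal (Submodule.span K (B '' (lam B (asi K A))ᶜ)) := by
  intro hV
  have hclosed : ∀ x y, edge B x y → (x ∈ lam B (asi K A) ↔ y ∈ lam B (asi K A)) :=
    fun x y hxy ↦ ⟨fun hx ↦ mem_lam_of_edge_of_lam_eq_succ hB.lam_asi_eq_succ hx hxy,
      fun hy ↦ by_contra fun hx ↦ hV.mem_of_edge_of_span_image hx hxy hy⟩
  rcases hconn.eq_empty_or_eq_univ hclosed with h | h
  · exact (hB.lam_asi_nonempty hdeg).ne_empty h
  · exact hB.lam_ne_univ hne _ h
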